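/- arXiv:1710.10042 — 2 statements merged into one kernel-verified Lean document; each statement's English description precedes it below -/
import Mathlib

section
/- In the ideal symmetric core-periphery network, the number of 3-element subsets of V inducing triad type 300 equals C(a,3) + C(a,2)·b, the number inducing triad type 201 equals a·C(b,2), the number inducing triad type 003 equals C(b,3), and no 3-element subset induces any other triad type. -/
variable {V : Type*}

/-- Dyad `{i, j}` is mutual: both arcs present. -/
def Mutual (A : V → V → Prop) (i j : V) : Prop := A i j ∧ A j i

/-- Dyad `{i, j}` is null: no arc present. -/
def NullDyad (A : V → V → Prop) (i j : V) : Prop := ¬ A i j ∧ ¬ A j i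

/-- Dyad `{i, j}` is asymmetric: exactly one of the two arcs is present. -/
def AsymDyad (A : V → V → Prop) (i j : V) : Prop :=
  (A i j ∧ ¬ A j i) ∨ (¬ A i j ∧ A j i)

/-- Triad type 003: all three dyads null. -/
def Triad003 (A : V → V → Prop) (i j k : V) : Prop :=
  NullDyad A i j ∧ NullDyad A j k ∧ NullDyad A i k

/-- Triad type 300: all three dyads mutual. -/
def Triad300 (A : V → V → Prop) (i j k : V) : Prop :=
  Mutual A i j ∧ Mutual A j k ∧ Mutual A i k

/-- Triad type 102: one mutual dyad, both remaining dyads null. -/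
def Triad102 (A : V → V → Prop) (i j k : V) : Prop :=
  (Mutual A i j ∧ NullDyad A j k ∧ NullDyad A i k) ∨
  (Mutual A j k ∧ NullDyad A i j ∧ NullDyad A i k) ∨
  (Mutual A i k ∧ NullDyad A i j ∧ NullDyad A j k)

/-- Triad type 201: two mutual dyads, the remaining dyad null. -/
def Triad201 (A : V → V → Prop) (i j k : V) : Prop :=
  (Mutual A i j ∧ Mutual A j k ∧ NullDyad A i k) ∨
  (Mutual A i j ∧ Mutual A i k ∧ NullDyad A j k) ∨
  (Mutual A j k ∧ Mutual A i k ∧ NullDyad A i j)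

/-- Triad type 012: exactly one asymmetric dyad, both remaining dyads null. -/
def Triad012 (A : V → V → Prop) (i j k : V) : Prop :=
  (AsymDyad A i j ∧ NullDyad A j k ∧ NullDyad A i k) ∨
  (AsymDyad A j k ∧ NullDyad A i j ∧ NullDyad A i k) ∨
  (AsymDyad A i k ∧ NullDyad A i j ∧ NullDyad A j k)

/-- Two asymmetric arcs `x → z` and `y → z` with common head `z`, dyad `{x, y}` null. -/
def Head021U (A : V → V → Prop) (x y z : V) : Prop :=
  A x z ∧ A y z ∧ ¬ A z x ∧ ¬ A z y ∧ NullDyad A x y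

/-- Triad type 021U: two asymmetric arcs with a common head, remaining dyad null. -/
def Triad021U (A : V → V → Prop) (i j k : V) : Prop :=
  Head021U A i j k ∨ Head021U A i k j ∨ Head021U A j k i

/-- Two asymmetric arcs `z → x` and `z → y` with common tail `z`, dyad `{x, y}` null. -/
def Tail021D (A : V → V → Prop) (x y z : V) : Prop :=
  A z x ∧ A z y ∧ ¬ A x z ∧ ¬ A y z ∧ NullDyad A x y

/-- Triad type 021D: two asymmetric arcs with a common tail, remaining dyad null. -/
def Triad021D (A : V → V → Prop) (i j k : V) : Prop :=
  Tail021D A i j k ∨ Tail021D A i k j ∨ Tail021D A j k i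

/-- A directed path `x → y → z` with all other arcs among the three vertices absent. -/
def Path021C (A : V → V → Prop) (x y z : V) : Prop :=
  A x y ∧ A y z ∧ ¬ A y x ∧ ¬ A z y ∧ NullDyad A x z

/-- Triad type 021C. -/
def Triad021C (A : V → V → Prop) (i j k : V) : Prop :=
  Path021C A i j k ∨ Path021C A i k j ∨ Path021C A j i k ∨
  Path021C A j k i ∨ Path021C A k i j ∨ Path021C A k j i

/-- Mutual dyad `{x, y}` plus asymmetric arcs from each of `x`, `y` to the third vertex `z`. -/
def Up120 (A : V → V → Prop) (x y z : V) : Prop :=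
  Mutual A x y ∧ A x z ∧ A y z ∧ ¬ A z x ∧ ¬ A z y

/-- Triad type 120U. -/
def Triad120U (A : V → V → Prop) (i j k : V) : Prop :=
  Up120 A i j k ∨ Up120 A i k j ∨ Up120 A j k i

/-- Mutual dyad `{x, y}` plus asymmetric arcs from the third vertex `z` to each of `x`, `y`. -/
def Down120 (A : V → V → Prop) (x y z : V) : Prop :=
  Mutual A x y ∧ A z x ∧ A z y ∧ ¬ A x z ∧ ¬ A y z

/-- Triad type 120D. -/
def Triad120D (A : V → V → Prop) (i j k : V) : Prop :=
  Down120 A i j k ∨ Down120 A i k j ∨ Down120 A j k i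

/-- Transitive triple: arcs `x → y`, `y → z`, `x → z`, with no reverse arcs. -/
def Trans030 (A : V → V → Prop) (x y z : V) : Prop :=
  A x y ∧ A y z ∧ A x z ∧ ¬ A y x ∧ ¬ A z y ∧ ¬ A z x

/-- Triad type 030T. -/
def Triad030T (A : V → V → Prop) (i j k : V) : Prop :=
  Trans030 A i j k ∨ Trans030 A i k j ∨ Trans030 A j i k ∨
  Trans030 A j k i ∨ Trans030 A k i j ∨ Trans030 A k j i

/-- Cyclic triple: arcs `x → y`, `y → z`, `z → x`, with no reverse arcs. -/
def Cycle030 (A : V → V → Prop) (x y z : V) : Prop :=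
  A x y ∧ A y z ∧ A z x ∧ ¬ A y x ∧ ¬ A z y ∧ ¬ A x z

/-- Triad type 030C. -/
def Triad030C (A : V → V → Prop) (i j k : V) : Prop :=
  Cycle030 A i j k ∨ Cycle030 A i k j

/-- The 3-element subset `s` induces the triad type `T`. -/
def InducesTriad [DecidableEq V] (T : V → V → V → Prop) (s : Finset V) : Prop :=
  ∃ i j k : V, i ≠ j ∧ i ≠ k ∧ j ≠ k ∧ s = {i, j, k} ∧ T i j k

/-- The ideal symmetric core-periphery network (`c v = true` means `v` is a core vertex):
an arc from `i` to `j` iff `i ≠ j` and at least one of them is in the core. -/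
def SymCPAdj (c : V → Bool) (i j : V) : Prop := i ≠ j ∧ (c i = true ∨ c j = true)

section Aux

open Finset

variable {c : V → Bool}

lemma symCP_mutual {i j : V} (h : i ≠ j) :
    Mutual (SymCPAdj c) i j ↔ (c i = true ∨ c j = true) := by
  constructor
  · rintro ⟨⟨-, h1⟩, -⟩; exact h1
  · intro h1; exact ⟨⟨h, h1⟩, ⟨h.symm, h1.symm⟩⟩

lemma symCP_null {i j : V} (h : i ≠ j) :
    NullDyad (SymCPAdj c) i j ↔ (c i = false ∧ c j = false) := by
  constructor
  · rintro ⟨h1, h2⟩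
    constructor
    · by_contra hc; exact h1 ⟨h, Or.inl (by simpa using hc)⟩
    · by_contra hc; exact h1 ⟨h, Or.inr (by simpa using hc)⟩
  · rintro ⟨h1, h2⟩
    constructor <;> rintro ⟨-, h3 | h3⟩ <;> simp_all

lemma triad300_iff {i j k : V} (hij : i ≠ j) (hik : i ≠ k) (hjk : j ≠ k) :
    Triad300 (SymCPAdj c) i j k ↔
      ((c i = true ∨ c j = true) ∧ (c j = true ∨ c k = true) ∧
        (c i = true ∨ c k = true)) := by
  unfold Triad300
  rw [symCP_mutual hij, symCP_mutual hjk, symCP_mutual hik]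

lemma triad201_iff {i j k : V} (hij : i ≠ j) (hik : i ≠ k) (hjk : j ≠ k) :
    Triad201 (SymCPAdj c) i j k ↔
      ((c i = true ∧ c j = false ∧ c k = false) ∨
       (c j = true ∧ c i = false ∧ c k = false) ∨
       (c k = true ∧ c i = false ∧ c j = false)) := by
  unfold Triad201
  rw [symCP_mutual hij, symCP_mutual hjk, symCP_mutual hik,
    symCP_null hij, symCP_null hjk, symCP_null hik]
  rcases hi : c i <;> rcases hj : c j <;> rcases hk : c k <;> simp

lemma triad003_iff {i j k : V} (hij : i ≠ j) (hik : i ≠ k) (hjk : j ≠ k) :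
    Triad003 (SymCPAdj c) i j k ↔
      (c i = false ∧ c j = false ∧ c k = false) := by
  unfold Triad003
  rw [symCP_null hij, symCP_null hjk, symCP_null hik]
  rcases hi : c i <;> rcases hj : c j <;> rcases hk : c k <;> simp

variable [DecidableEq V]

lemma induces003_iff {s : Finset V} :
    InducesTriad (Triad003 (SymCPAdj c)) s ↔
      s.card = 3 ∧ ∀ v ∈ s, c v = false := by
  constructor
  · rintro ⟨i, j, k, hij, hik, hjk, rfl, ht⟩
    rw [triad003_iff hij hik hjk] at ht
    refine ⟨Finset.card_eq_three.mpr ⟨i, j, k, hij, hik, hjk, rfl⟩, ?_⟩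
    intro v hv
    simp only [mem_insert, mem_singleton] at hv
    rcases hv with rfl | rfl | rfl <;> tauto
  · rintro ⟨hcard, hall⟩
    obtain ⟨i, j, k, hij, hik, hjk, rfl⟩ := Finset.card_eq_three.mp hcard
    refine ⟨i, j, k, hij, hik, hjk, rfl, ?_⟩
    rw [triad003_iff hij hik hjk]
    refine ⟨hall i ?_, hall j ?_, hall k ?_⟩ <;> simp

lemma induces201_iff {s : Finset V} :
    InducesTriad (Triad201 (SymCPAdj c)) s ↔
      s.card = 3 ∧ ∃ x ∈ s, c x = true ∧ ∀ v ∈ s, v ≠ x → c v = false := by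
  constructor
  · rintro ⟨i, j, k, hij, hik, hjk, rfl, ht⟩
    rw [triad201_iff hij hik hjk] at ht
    refine ⟨Finset.card_eq_three.mpr ⟨i, j, k, hij, hik, hjk, rfl⟩, ?_⟩
    rcases ht with ⟨h1, h2, h3⟩ | ⟨h1, h2, h3⟩ | ⟨h1, h2, h3⟩
    · exact ⟨i, by simp, h1, by
        intro v hv hvne
        simp only [mem_insert, mem_singleton] at hv
        rcases hv with rfl | rfl | rfl <;> tauto⟩
    · exact ⟨j, by simp, h1, by
        intro v hv hvne
        simp only [mem_insert, mem_singleton] at hv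
        rcases hv with rfl | rfl | rfl <;> tauto⟩
    · exact ⟨k, by simp, h1, by
        intro v hv hvne
        simp only [mem_insert, mem_singleton] at hv
        rcases hv with rfl | rfl | rfl <;> tauto⟩
  · rintro ⟨hcard, x, hx, hcx, hrest⟩
    obtain ⟨i, j, k, hij, hik, hjk, rfl⟩ := Finset.card_eq_three.mp hcard
    refine ⟨i, j, k, hij, hik, hjk, rfl, ?_⟩
    rw [triad201_iff hij hik hjk]
    have hi : i ∈ ({i, j, k} : Finset V) := by simp
    have hj : j ∈ ({i, j, k} : Finset V) := by simp
    have hk : k ∈ ({i, j, k} : Finset V) := by simp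
    simp only [mem_insert, mem_singleton] at hx
    rcases hx with rfl | rfl | rfl
    · exact Or.inl ⟨hcx, hrest j hj (Ne.symm hij), hrest k hk (Ne.symm hik)⟩
    · exact Or.inr (Or.inl ⟨hcx, hrest i hi hij, hrest k hk (Ne.symm hjk)⟩)
    · exact Or.inr (Or.inr ⟨hcx, hrest i hi hik, hrest j hj hjk⟩)

lemma induces300_iff {s : Finset V} :
    InducesTriad (Triad300 (SymCPAdj c)) s ↔
      s.card = 3 ∧ ∀ x ∈ s, ∀ y ∈ s, x ≠ y → (c x = true ∨ c y = true) := by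
  constructor
  · rintro ⟨i, j, k, hij, hik, hjk, rfl, ht⟩
    rw [triad300_iff hij hik hjk] at ht
    refine ⟨Finset.card_eq_three.mpr ⟨i, j, k, hij, hik, hjk, rfl⟩, ?_⟩
    intro x hx y hy hxy
    simp only [mem_insert, mem_singleton] at hx hy
    obtain ⟨h1, h2, h3⟩ := ht
    rcases hx with rfl | rfl | rfl <;> rcases hy with rfl | rfl | rfl <;> tauto
  · rintro ⟨hcard, hall⟩
    obtain ⟨i, j, k, hij, hik, hjk, rfl⟩ := Finset.card_eq_three.mp hcard
    refine ⟨i, j, k, hij, hik, hjk, rfl, ?_⟩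
    rw [triad300_iff hij hik hjk]
    have hi : i ∈ ({i, j, k} : Finset V) := by simp
    have hj : j ∈ ({i, j, k} : Finset V) := by simp
    have hk : k ∈ ({i, j, k} : Finset V) := by simp
    exact ⟨hall i hi j hj hij, hall j hj k hk hjk, hall i hi k hk hik⟩

end Aux

/-- Triad census of the ideal symmetric core-periphery network. -/
theorem symCP_triad_census {V : Type*} [Fintype V] [DecidableEq V]
    (c : V → Bool) (a b : ℕ)
    (ha : a = (Finset.univ.filter fun v => c v = true).card)
    (hb : b = (Finset.univ.filter fun v => c v = false).card) :
    {s : Finset V | InducesTriad (Triad300 (SymCPAdj c)) s}.ncard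
        = a.choose 3 + a.choose 2 * b ∧
    {s : Finset V | InducesTriad (Triad201 (SymCPAdj c)) s}.ncard = a * b.choose 2 ∧
    {s : Finset V | InducesTriad (Triad003 (SymCPAdj c)) s}.ncard = b.choose 3 ∧
    (∀ s : Finset V, s.card = 3 →
        InducesTriad (Triad300 (SymCPAdj c)) s ∨
        InducesTriad (Triad201 (SymCPAdj c)) s ∨
        InducesTriad (Triad003 (SymCPAdj c)) s) := by
  classical
  set A : Finset V := Finset.univ.filter (fun v => c v = true) with hA
  set B : Finset V := Finset.univ.filter (fun v => c v = false) with hB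
  have hmemA : ∀ v : V, v ∈ A ↔ c v = true := by intro v; simp [hA]
  have hmemB : ∀ v : V, v ∈ B ↔ c v = false := by intro v; simp [hB]
  -- injectivity of (x, t) ↦ insert x t when x and elements of t have distinct colors
  have injgen : ∀ (b₀ : Bool), Set.InjOn (fun p : V × Finset V => insert p.1 p.2)
      ↑((Finset.univ.filter (fun v => c v = b₀)) ×ˢ
        (Finset.univ.filter (fun v => c v = !b₀)).powersetCard 2) := by
    intro b₀
    rintro ⟨x, t⟩ hp ⟨y, u⟩ hq h
    simp only [Finset.mem_coe, Finset.mem_product, Finset.mem_powersetCard,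
      Finset.mem_filter, Finset.mem_univ, true_and] at hp hq
    obtain ⟨hx, ht, -⟩ := hp
    obtain ⟨hy, hu, -⟩ := hq
    have hxt : x ∉ t := fun hmem => by
      have := (Finset.mem_filter.mp (ht hmem)).2; simp_all
    have hyu : y ∉ u := fun hmem => by
      have := (Finset.mem_filter.mp (hu hmem)).2; simp_all
    simp only at h
    have hxy : x = y := by
      have hx' : x ∈ insert y u := h ▸ Finset.mem_insert_self x t
      rcases Finset.mem_insert.mp hx' with rfl | hxu
      · rfl
      · have := (Finset.mem_filter.mp (hu hxu)).2; simp_all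
    subst hxy
    have htu : t = u := by
      have : (insert x t).erase x = (insert x u).erase x := by rw [h]
      rwa [Finset.erase_insert hxt, Finset.erase_insert hyu] at this
    rw [htu]
  -- count 003
  have h003 : {s : Finset V | InducesTriad (Triad003 (SymCPAdj c)) s}
      = ↑(B.powersetCard 3) := by
    ext s
    simp only [Set.mem_setOf_eq, Finset.mem_coe, Finset.mem_powersetCard]
    rw [induces003_iff]
    constructor
    · rintro ⟨h1, h2⟩; exact ⟨fun v hv => (hmemB v).2 (h2 v hv), h1⟩
    · rintro ⟨h1, h2⟩; exact ⟨h2, fun v hv => (hmemB v).1 (h1 hv)⟩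
  -- count 201
  have h201 : {s : Finset V | InducesTriad (Triad201 (SymCPAdj c)) s}
      = ↑((A ×ˢ B.powersetCard 2).image (fun p => insert p.1 p.2)) := by
    ext s
    simp only [Set.mem_setOf_eq, Finset.coe_image, Set.mem_image, Finset.mem_coe,
      Finset.mem_product, Finset.mem_powersetCard]
    rw [induces201_iff]
    constructor
    · rintro ⟨hcard, x, hx, hcx, hrest⟩
      refine ⟨(x, s.erase x), ⟨(hmemA x).2 hcx, fun v hv => (hmemB v).2
          (hrest v (Finset.mem_of_mem_erase hv) (Finset.ne_of_mem_erase hv)), ?_⟩, ?_⟩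
      · rw [Finset.card_erase_of_mem hx, hcard]
      · simp [Finset.insert_erase hx]
    · rintro ⟨⟨x, t⟩, ⟨hxA, htB, htcard⟩, rfl⟩
      have hxt : x ∉ t := fun hmem => by
        have h1 := (hmemB x).1 (htB hmem)
        have h2 := (hmemA x).1 hxA
        simp_all
      refine ⟨?_, x, by simp, (hmemA x).1 hxA, ?_⟩
      · simp only
        rw [Finset.card_insert_of_notMem hxt, htcard]
      · intro v hv hvx
        rcases Finset.mem_insert.mp hv with rfl | hvt
        · exact absurd rfl hvx
        · exact (hmemB v).1 (htB hvt)
  -- count 300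
  have h300 : {s : Finset V | InducesTriad (Triad300 (SymCPAdj c)) s}
      = ↑(A.powersetCard 3 ∪ (B ×ˢ A.powersetCard 2).image (fun p => insert p.1 p.2)) := by
    ext s
    simp only [Set.mem_setOf_eq, Finset.mem_coe, Finset.mem_union, Finset.mem_image,
      Finset.mem_powersetCard, Finset.mem_product]
    rw [induces300_iff]
    constructor
    · rintro ⟨hcard, hpair⟩
      by_cases hall : ∀ v ∈ s, c v = true
      · exact Or.inl ⟨fun v hv => (hmemA v).2 (hall v hv), hcard⟩
      · push_neg at hall
        obtain ⟨x, hx, hcx⟩ := hall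
        have hcx' : c x = false := by
          rcases hcxv : c x with _ | _
          · rfl
          · exact absurd hcxv hcx
        refine Or.inr ⟨(x, s.erase x), ⟨(hmemB x).2 hcx', ?_, ?_⟩, ?_⟩
        · intro v hv
          refine (hmemA v).2 ?_
          have := hpair x hx v (Finset.mem_of_mem_erase hv)
            (Ne.symm (Finset.ne_of_mem_erase hv))
          rcases this with h | h
          · rw [h] at hcx'; exact absurd hcx' (by simp)
          · exact h
        · rw [Finset.card_erase_of_mem hx, hcard]
        · simp [Finset.insert_erase hx]
    · rintro (⟨hsub, hcard⟩ | ⟨⟨x, t⟩, ⟨hxB, htA, htcard⟩, rfl⟩)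
      · refine ⟨hcard, fun u hu v hv huv => Or.inl ((hmemA u).1 (hsub hu))⟩
      · have hxt : x ∉ t := fun hmem => by
          have h1 := (hmemA x).1 (htA hmem)
          have h2 := (hmemB x).1 hxB
          simp_all
        refine ⟨?_, ?_⟩
        · simp only
          rw [Finset.card_insert_of_notMem hxt, htcard]
        · intro u hu v hv huv
          rcases Finset.mem_insert.mp hu with rfl | hut
          · rcases Finset.mem_insert.mp hv with rfl | hvt
            · exact absurd rfl huv
            · exact Or.inr ((hmemA v).1 (htA hvt))
          · exact Or.inl ((hmemA u).1 (htA hut))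
  have hdisj : Disjoint (A.powersetCard 3)
      ((B ×ˢ A.powersetCard 2).image (fun p => insert p.1 p.2)) := by
    rw [Finset.disjoint_left]
    intro s hs hmem
    obtain ⟨⟨x, t⟩, hp, rfl⟩ := Finset.mem_image.mp hmem
    simp only [Finset.mem_powersetCard, Finset.mem_product] at hs hp
    have hx1 := (hmemA x).1 (hs.1 (Finset.mem_insert_self x t))
    have hx2 := (hmemB x).1 hp.1
    simp_all
  refine ⟨?_, ?_, ?_, ?_⟩
  · rw [h300, Set.ncard_coe_finset, Finset.card_union_of_disjoint hdisj,
      Finset.card_image_of_injOn, Finset.card_powersetCard, Finset.card_product,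
      Finset.card_powersetCard, ha, hb]
    · ring
    · have := injgen false
      simpa [hA, hB] using this
  · rw [h201, Set.ncard_coe_finset, Finset.card_image_of_injOn,
      Finset.card_product, Finset.card_powersetCard, ha, hb]
    have := injgen true
    simpa [hA, hB] using this
  · rw [h003, Set.ncard_coe_finset, Finset.card_powersetCard, hb]
  · intro s hs
    obtain ⟨i, j, k, hij, hik, hjk, rfl⟩ := Finset.card_eq_three.mp hs
    rcases hi : c i <;> rcases hj : c j <;> rcases hk : c k <;>
      first
      | (refine Or.inl ⟨i, j, k, hij, hik, hjk, rfl,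
          (triad300_iff hij hik hjk).2 ?_⟩; simp [hi, hj, hk]; done)
      | (refine Or.inr (Or.inl ⟨i, j, k, hij, hik, hjk, rfl,
          (triad201_iff hij hik hjk).2 ?_⟩); simp [hi, hj, hk]; done)
      | (refine Or.inr (Or.inr ⟨i, j, k, hij, hik, hjk, rfl,
          (triad003_iff hij hik hjk).2 ?_⟩); simp [hi, hj, hk]; done)
end

section
/- In the ideal transitivity network without complete diagonal blocks, the number of 3-element subsets of V inducing triad type 030T equals n₀·n₁·n₂; the number inducing 021U equals C(n₀,2)·(n₁+n₂) + C(n₁,2)·n₂; the number inducing 021D equals n₀·(C(n₁,2)+C(n₂,2)) + n₁·C(n₂,2); the number inducing 003 equals C(n₀,3)+C(n₁,3)+C(n₂,3); and no 3-element subset induces any other triad type. -/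
variable {V : Type*}

/-- The ideal transitivity network without complete blocks on the diagonal:
an arc from `i` to `j` iff the level of `i` is strictly smaller than the level of `j`. -/
def TransAdj (c : V → Fin 3) (i j : V) : Prop := (c i : ℕ) < (c j : ℕ)

/-! The type of a triad in the transitivity network depends only on the multiset of levels of
its three vertices: `030T` for levels `{0, 1, 2}`, `021U` for two equal levels below the third,
`021D` for two equal levels above the third, `003` for three equal levels. A 3-set with a
prescribed level multiset is chosen independently inside each level class, so there are
`∏ₗ C(nₗ, kₗ)` of them, where `kₗ` is the multiplicity of level `l`. -/

open Finset

section FiberCount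

variable {ι : Type*} [DecidableEq ι] {f : V → ι}

theorem map_val_eq_iff (s : Finset V) (m : Multiset ι) :
    s.val.map f = m ↔ ∀ i, #{v ∈ s | f v = i} = m.count i := by
  simp only [Multiset.ext, Multiset.count_map, card_def, filter_val, eq_comm (b := f _)]

variable [DecidableEq V] [Fintype ι]

theorem filter_biUnion_eq_of_mapsTo {t : ι → Finset V} (ht : ∀ i, ∀ v ∈ t i, f v = i)
    (i : ι) :
    {v ∈ univ.biUnion t | f v = i} = t i := by
  ext v
  simp only [mem_filter, mem_biUnion, mem_univ, true_and]
  constructor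
  · rintro ⟨⟨j, hv⟩, rfl⟩
    rwa [ht j v hv]
  · exact fun hv => ⟨⟨i, hv⟩, ht i v hv⟩

variable [Fintype V]

theorem card_filter_card_fiber_eq (f : V → ι) (k : ι → ℕ) :
    #{s : Finset V | ∀ i, #{v ∈ s | f v = i} = k i} = ∏ i, (#{v | f v = i}).choose (k i) := by
  simp_rw [← card_powersetCard, ← Fintype.card_piFinset]
  have mem_pi : ∀ t : ι → Finset V,
      t ∈ Fintype.piFinset (fun i => powersetCard (k i) {v | f v = i}) ↔
        ∀ i, t i ⊆ ({v | f v = i} : Finset V) ∧ #(t i) = k i := by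
    simp [mem_powersetCard]
  have fiber_of_mem_pi {t : ι → Finset V}
      (ht : ∀ i, t i ⊆ ({v | f v = i} : Finset V) ∧ #(t i) = k i) :
      ∀ i, ∀ v ∈ t i, f v = i :=
    fun i v hv => (mem_filter.mp ((ht i).1 hv)).2
  refine card_nbij' (fun s i => {v ∈ s | f v = i}) (fun t => univ.biUnion t) ?_ ?_ ?_ ?_
  · intro s hs
    simp only [coe_filter, mem_univ, true_and, Set.mem_ofPred_eq, mem_coe, mem_pi] at hs ⊢
    exact fun i => ⟨filter_subset_filter _ (subset_univ s), hs i⟩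
  · intro t ht
    simp only [coe_filter, mem_univ, true_and, Set.mem_ofPred_eq, mem_coe, mem_pi] at ht ⊢
    intro i
    rw [filter_biUnion_eq_of_mapsTo (fiber_of_mem_pi ht)]
    exact (ht i).2
  · intro s _
    ext v
    simp
  · intro t ht
    simp only [mem_coe, mem_pi] at ht
    funext i
    exact filter_biUnion_eq_of_mapsTo (fiber_of_mem_pi ht) i

theorem ncard_setOf_map_val_mem (f : V → ι) (P : Finset (Multiset ι)) :
    {s : Finset V | s.val.map f ∈ P}.ncard =
      ∑ m ∈ P, ∏ i, (#{v | f v = i}).choose (m.count i) := by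
  rw [Set.ncard_eq_toFinset_card', Set.toFinset_ofPred,
    card_eq_sum_card_fiberwise (f := fun s => s.val.map f) (t := P) (fun s hs => by simpa using hs)]
  refine sum_congr rfl fun m hm => ?_
  rw [filter_filter, ← card_filter_card_fiber_eq]
  congr 1
  ext s
  simp only [mem_filter, mem_univ, true_and, ← map_val_eq_iff]
  exact ⟨And.right, fun h => ⟨h ▸ hm, h⟩⟩

end FiberCount

section LevelTriads

variable {ι : Type*} [DecidableEq V] {f : V → ι} {T : V → V → V → Prop}
  {P : Finset (Multiset ι)}

theorem map_val_triple (f : V → ι) {i j k : V} (hij : i ≠ j) (hik : i ≠ k) (hjk : j ≠ k) :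
    ({i, j, k} : Finset V).val.map f = {f i, f j, f k} := by
  simp [hij, hik, hjk]

theorem inducesTriad_iff_map_val_mem (hT : ∀ i j k, T i j k ↔ {f i, f j, f k} ∈ P)
    (hP : ∀ m ∈ P, Multiset.card m = 3) (s : Finset V) :
    InducesTriad T s ↔ s.val.map f ∈ P := by
  constructor
  · rintro ⟨i, j, k, hij, hik, hjk, rfl, h⟩
    rwa [map_val_triple f hij hik hjk, ← hT]
  · intro hs
    obtain ⟨i, j, k, hij, hik, hjk, rfl⟩ := card_eq_three.mp (by simpa using hP _ hs)
    rw [map_val_triple f hij hik hjk, ← hT] at hs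
    exact ⟨i, j, k, hij, hik, hjk, rfl, hs⟩

theorem ncard_setOf_inducesTriad [Fintype V] [Fintype ι] [DecidableEq ι]
    (hT : ∀ i j k, T i j k ↔ {f i, f j, f k} ∈ P) (hP : ∀ m ∈ P, Multiset.card m = 3) :
    {s : Finset V | InducesTriad T s}.ncard =
      ∑ m ∈ P, ∏ i, (#{v | f v = i}).choose (m.count i) := by
  simp_rw [inducesTriad_iff_map_val_mem hT hP]
  exact ncard_setOf_map_val_mem f P

end LevelTriads

section TransitivityNetwork

def levels030T : Finset (Multiset (Fin 3)) := {{0, 1, 2}}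
def levels021U : Finset (Multiset (Fin 3)) := {{0, 0, 1}, {0, 0, 2}, {1, 1, 2}}
def levels021D : Finset (Multiset (Fin 3)) := {{0, 1, 1}, {0, 2, 2}, {1, 2, 2}}
def levels003 : Finset (Multiset (Fin 3)) := {{0, 0, 0}, {1, 1, 1}, {2, 2, 2}}

variable (c : V → Fin 3) (i j k : V)

theorem triad030T_transAdj_iff :
    Triad030T (TransAdj c) i j k ↔ {c i, c j, c k} ∈ levels030T := by
  unfold Triad030T Trans030 TransAdj levels030T
  generalize c i = a, c j = b, c k = d
  revert a b d
  decide

theorem triad021U_transAdj_iff :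
    Triad021U (TransAdj c) i j k ↔ {c i, c j, c k} ∈ levels021U := by
  unfold Triad021U Head021U NullDyad TransAdj levels021U
  generalize c i = a, c j = b, c k = d
  revert a b d
  decide

theorem triad021D_transAdj_iff :
    Triad021D (TransAdj c) i j k ↔ {c i, c j, c k} ∈ levels021D := by
  unfold Triad021D Tail021D NullDyad TransAdj levels021D
  generalize c i = a, c j = b, c k = d
  revert a b d
  decide

theorem triad003_transAdj_iff :
    Triad003 (TransAdj c) i j k ↔ {c i, c j, c k} ∈ levels003 := by
  unfold Triad003 NullDyad TransAdj levels003
  generalize c i = a, c j = b, c k = d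
  revert a b d
  decide

variable [DecidableEq V]

theorem inducesTriad_transAdj_of_card_eq_three {s : Finset V} (hs : #s = 3) :
    InducesTriad (Triad030T (TransAdj c)) s ∨ InducesTriad (Triad021U (TransAdj c)) s ∨
      InducesTriad (Triad021D (TransAdj c)) s ∨ InducesTriad (Triad003 (TransAdj c)) s := by
  rw [inducesTriad_iff_map_val_mem (triad030T_transAdj_iff c) (by decide),
    inducesTriad_iff_map_val_mem (triad021U_transAdj_iff c) (by decide),
    inducesTriad_iff_map_val_mem (triad021D_transAdj_iff c) (by decide),
    inducesTriad_iff_map_val_mem (triad003_transAdj_iff c) (by decide)]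
  obtain ⟨a, b, d, hm⟩ := Multiset.card_eq_three.mp (by simpa using hs : (s.val.map c).card = 3)
  rw [hm]
  clear hm
  revert a b d
  decide

variable [Fintype V]

theorem ncard_inducesTriad030T_transAdj :
    {s : Finset V | InducesTriad (Triad030T (TransAdj c)) s}.ncard =
      #{v | c v = 0} * #{v | c v = 1} * #{v | c v = 2} := by
  rw [ncard_setOf_inducesTriad (triad030T_transAdj_iff c) (by decide), levels030T, sum_singleton]
  simp [Fin.prod_univ_three]

theorem ncard_inducesTriad021U_transAdj :
    {s : Finset V | InducesTriad (Triad021U (TransAdj c)) s}.ncard =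
      (#{v | c v = 0}).choose 2 * (#{v | c v = 1} + #{v | c v = 2}) +
        (#{v | c v = 1}).choose 2 * #{v | c v = 2} := by
  rw [ncard_setOf_inducesTriad (triad021U_transAdj_iff c) (by decide), levels021U,
    sum_insert (by decide), sum_insert (by decide), sum_singleton]
  simp [Fin.prod_univ_three]
  ring

theorem ncard_inducesTriad021D_transAdj :
    {s : Finset V | InducesTriad (Triad021D (TransAdj c)) s}.ncard =
      #{v | c v = 0} * ((#{v | c v = 1}).choose 2 + (#{v | c v = 2}).choose 2) +
        #{v | c v = 1} * (#{v | c v = 2}).choose 2 := by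
  rw [ncard_setOf_inducesTriad (triad021D_transAdj_iff c) (by decide), levels021D,
    sum_insert (by decide), sum_insert (by decide), sum_singleton]
  simp [Fin.prod_univ_three]
  ring

theorem ncard_inducesTriad003_transAdj :
    {s : Finset V | InducesTriad (Triad003 (TransAdj c)) s}.ncard =
      (#{v | c v = 0}).choose 3 + (#{v | c v = 1}).choose 3 + (#{v | c v = 2}).choose 3 := by
  rw [ncard_setOf_inducesTriad (triad003_transAdj_iff c) (by decide), levels003,
    sum_insert (by decide), sum_insert (by decide), sum_singleton]
  simp [Fin.prod_univ_three, add_assoc]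

end TransitivityNetwork

/-- Triad census of the ideal transitivity network without complete diagonal blocks. -/
theorem trans_triad_census {V : Type*} [Fintype V] [DecidableEq V]
    (c : V → Fin 3) (n₀ n₁ n₂ : ℕ)
    (h₀ : n₀ = (Finset.univ.filter fun v => c v = 0).card)
    (h₁ : n₁ = (Finset.univ.filter fun v => c v = 1).card)
    (h₂ : n₂ = (Finset.univ.filter fun v => c v = 2).card) :
    {s : Finset V | InducesTriad (Triad030T (TransAdj c)) s}.ncard = n₀ * n₁ * n₂ ∧
    {s : Finset V | InducesTriad (Triad021U (TransAdj c)) s}.ncard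
        = n₀.choose 2 * (n₁ + n₂) + n₁.choose 2 * n₂ ∧
    {s : Finset V | InducesTriad (Triad021D (TransAdj c)) s}.ncard
        = n₀ * (n₁.choose 2 + n₂.choose 2) + n₁ * n₂.choose 2 ∧
    {s : Finset V | InducesTriad (Triad003 (TransAdj c)) s}.ncard
        = n₀.choose 3 + n₁.choose 3 + n₂.choose 3 ∧
    (∀ s : Finset V, s.card = 3 →
        InducesTriad (Triad030T (TransAdj c)) s ∨
        InducesTriad (Triad021U (TransAdj c)) s ∨
        InducesTriad (Triad021D (TransAdj c)) s ∨
        InducesTriad (Triad003 (TransAdj c)) s) := by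
  subst h₀ h₁ h₂
  exact ⟨ncard_inducesTriad030T_transAdj c, ncard_inducesTriad021U_transAdj c,
    ncard_inducesTriad021D_transAdj c, ncard_inducesTriad003_transAdj c,
    fun _ => inducesTriad_transAdj_of_card_eq_three c⟩
end
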